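/- Let k ∈ ℂ with k ≠ 1, let (S, C, D) be a Jacobi triple with modulus k, and let β ∈ ℂ with β² = 1 − k, β ≠ 0. On the open set U = { z ∈ ℂ : C(−iz/β) ≠ 0 }, the triple (z ↦ i·β·S(−iz/β)/C(−iz/β), z ↦ D(−iz/β)/C(−iz/β), z ↦ 1/C(−iz/β)) satisfies system (1) with modulus 1/(1 − k). (This is sn(i√(1−k) x | 1/(1−k)) = i√(1−k) sc(x|k), cn = dc(x|k), dn = nc(x|k).) -/

import Mathlib

/-- A Jacobi triple with modulus `k`: the model is `(sn(·|k), cn(·|k), dn(·|k))`. -/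
def IsJacobiTriple (k : ℂ) (S C D : ℂ → ℂ) : Prop :=
  ∀ z : ℂ, HasDerivAt S (C z * D z) z ∧ HasDerivAt C (-(S z * D z)) z ∧
    HasDerivAt D (-(k * S z * C z)) z ∧
    S z ^ 2 + C z ^ 2 = 1 ∧ D z ^ 2 + k * S z ^ 2 = 1

/-- A triple `(St, Ct, Dt)` satisfies system (1) with modulus `m` on `U`:
at every point of `U` the functions are differentiable with `St′ = Ct·Dt`,
and `St² + Ct² = 1` and `Dt² + m·St² = 1` hold on `U`. -/
def SatisfiesSystem1 (m : ℂ) (St Ct Dt : ℂ → ℂ) (U : Set ℂ) : Prop :=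
  ∀ z ∈ U, HasDerivAt St (Ct z * Dt z) z ∧
    DifferentiableAt ℂ Ct z ∧ DifferentiableAt ℂ Dt z ∧
    St z ^ 2 + Ct z ^ 2 = 1 ∧ Dt z ^ 2 + m * St z ^ 2 = 1

/-
Jacobi's imaginary transformation. Since `S/C` has derivative `D/C²` wherever `C ≠ 0`, the chain
rule along `z ↦ -iz/β` together with `iβ · (-i/β) = 1` gives `(iβ S/C)' = (D/C)(1/C)`. The two
quadratic relations follow from `S² + C² = 1` and `D² + kS² = 1` after clearing `C²`, using
`β² = 1 - k`.
-/

namespace IsJacobiTriple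

variable {k : ℂ} {S C D : ℂ → ℂ}

theorem hasDerivAt_div (hJ : IsJacobiTriple k S C D) {w : ℂ} (hw : C w ≠ 0) :
    HasDerivAt (fun w => S w / C w) (D w / C w ^ 2) w := by
  obtain ⟨hS, hC, -, hSC, -⟩ := hJ w
  refine (hS.div hC hw).congr_deriv ?_
  field_simp
  linear_combination D w * hSC

end IsJacobiTriple

theorem sq_add_sq_imaginary_transform {k β s c d : ℂ} (hβ : β ^ 2 = 1 - k)
    (hsc : s ^ 2 + c ^ 2 = 1) (hds : d ^ 2 + k * s ^ 2 = 1) (hc : c ≠ 0) :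
    (Complex.I * β * s / c) ^ 2 + (d / c) ^ 2 = 1 := by
  field_simp
  linear_combination (β ^ 2 * s ^ 2) * Complex.I_sq - s ^ 2 * hβ + hds - hsc

theorem one_div_sq_add_mul_sq_imaginary_transform {k β s c : ℂ} (hβ : β ^ 2 = 1 - k)
    (hβ0 : β ≠ 0) (hsc : s ^ 2 + c ^ 2 = 1) (hc : c ≠ 0) :
    (1 / c) ^ 2 + 1 / (1 - k) * (Complex.I * β * s / c) ^ 2 = 1 := by
  rw [← hβ]
  field_simp
  linear_combination s ^ 2 * Complex.I_sq - hsc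

theorem stmt_7_general (k : ℂ) (S C D : ℂ → ℂ) (hJ : IsJacobiTriple k S C D)
    (β : ℂ) (hβ : β ^ 2 = 1 - k) (hβ0 : β ≠ 0) :
    SatisfiesSystem1 (1 / (1 - k))
      (fun z => Complex.I * β * S (-Complex.I * z / β) / C (-Complex.I * z / β))
      (fun z => D (-Complex.I * z / β) / C (-Complex.I * z / β))
      (fun z => 1 / C (-Complex.I * z / β))
      {z : ℂ | C (-Complex.I * z / β) ≠ 0} := by
  intro z hc
  have hscale : HasDerivAt (fun z : ℂ => -Complex.I * z / β) (-Complex.I / β) z := by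
    simpa using ((hasDerivAt_id z).const_mul (-Complex.I)).div_const β
  obtain ⟨-, hC, hD, hSC, hDS⟩ := hJ (-Complex.I * z / β)
  have hC' := hC.differentiableAt.comp z hscale.differentiableAt
  refine ⟨?_, (hD.differentiableAt.comp z hscale.differentiableAt).div hC' hc,
    (differentiableAt_const 1).div hC' hc, sq_add_sq_imaginary_transform hβ hSC hDS hc,
    one_div_sq_add_mul_sq_imaginary_transform hβ hβ0 hSC hc⟩
  have hsc := ((hJ.hasDerivAt_div hc).comp z hscale).const_mul (Complex.I * β)
  simp only [Function.comp_def, ← mul_div_assoc] at hsc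
  have hIβ : Complex.I * β * -Complex.I / β = 1 := by
    field_simp
    linear_combination -Complex.I_sq
  refine hsc.congr_deriv ?_
  linear_combination (D (-Complex.I * z / β) / C (-Complex.I * z / β) ^ 2) * hIβ

theorem stmt_7 (k : ℂ) (hk : k ≠ 1) (S C D : ℂ → ℂ) (hJ : IsJacobiTriple k S C D)
    (β : ℂ) (hβ : β ^ 2 = 1 - k) (hβ0 : β ≠ 0) :
    SatisfiesSystem1 (1 / (1 - k))
      (fun z => Complex.I * β * S (-Complex.I * z / β) / C (-Complex.I * z / β))
      (fun z => D (-Complex.I * z / β) / C (-Complex.I * z / β))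
      (fun z => 1 / C (-Complex.I * z / β))
      {z : ℂ | C (-Complex.I * z / β) ≠ 0} :=
  stmt_7_general k S C D hJ β hβ hβ0
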